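/- arXiv:1806.02010 — 2 statements merged into one kernel-verified Lean document; each statement's English description precedes it below -/
import Mathlib

section
/- Let q₀, q₁ be two nonzero homogeneous quadratic polynomials in three variables over ℂ with no common (non-constant) polynomial factor. Then their common zero locus in ℙ² consists of at most 4 points. -/
/-!
Suppose the conics `q₀ = 0` and `q₁ = 0` had five distinct common points. A conic through three
collinear points contains their line, so if three of the five points are collinear, the linear
form of that line divides both `q₀` and `q₁`. Otherwise take two of the points, `u` and `w`, and
the further point `u + w` on the line through them. Unless both conics pass through `u + w` (and
then contain the line), some nonzero member `a q₀ - b q₁` of the pencil does. That member contains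
the line, so it is the linear form of the line times a linear form vanishing at the three remaining
points, which are not collinear; hence it is zero. Then `q₀` and `q₁` are proportional, so they do
share a factor.
-/

open MvPolynomial

namespace MvPolynomial

variable {σ τ R K : Type*}

section CommSemiring

variable [CommSemiring R]

lemma eval_bind₁ (v : τ → R) (g : σ → MvPolynomial τ R) (p : MvPolynomial σ R) :
    eval v (bind₁ g p) = eval (fun i => eval v (g i)) p :=
  eval₂Hom_bind₁ _ _ _ _

lemma IsHomogeneous.not_isUnit [Nontrivial R] {p : MvPolynomial σ R} {n : ℕ}
    (hp : p.IsHomogeneous n) (hn : n ≠ 0) : ¬IsUnit p := by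
  intro hu
  have h0 : constantCoeff p = 0 := hp.coeff_eq_zero (by simpa using hn.symm)
  simpa [h0] using hu.map constantCoeff

attribute [local instance] MvPolynomial.gradedAlgebra in
lemma IsHomogeneous.exists_eq_mul_of_dvd {p ℓ : MvPolynomial σ R} {i k : ℕ}
    (hp : p.IsHomogeneous (i + k)) (hℓ : ℓ.IsHomogeneous i) (h : ℓ ∣ p) :
    ∃ m : MvPolynomial σ R, m.IsHomogeneous k ∧ p = ℓ * m := by
  obtain ⟨m, rfl⟩ := h
  refine ⟨homogeneousComponent k m, homogeneousComponent_isHomogeneous k m, ?_⟩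
  have := DirectSum.coe_decompose_mul_of_left_mem_of_le (𝒜 := homogeneousSubmodule σ R)
    (b := m) ((mem_homogeneousSubmodule i ℓ).mpr hℓ) (Nat.le_add_right i k)
  simp only [DirectSum.decompose, Equiv.coe_fn_mk, decomposition.decompose'_apply,
    Nat.add_sub_cancel_left] at this
  rw [← this, homogeneousComponent_eq_self hp]

lemma IsHomogeneous.exists_linearMap_eval {m : MvPolynomial σ R} (hm : m.IsHomogeneous 1) :
    ∃ f : (σ → R) →ₗ[R] R, ∀ v, eval v m = f v := by
  have hm' : m ∈ Submodule.span R (Set.range X) := by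
    rwa [← homogeneousSubmodule_one_eq_span_X, mem_homogeneousSubmodule]
  clear hm
  induction hm' using Submodule.span_induction with
  | mem p hp =>
    obtain ⟨i, rfl⟩ := hp
    exact ⟨LinearMap.proj i, fun v => eval_X _⟩
  | zero => exact ⟨0, fun v => map_zero _⟩
  | add p q _ _ hp hq =>
    obtain ⟨f, hf⟩ := hp
    obtain ⟨g, hg⟩ := hq
    exact ⟨f + g, fun v => by rw [map_add, hf, hg, LinearMap.add_apply]⟩
  | smul c p _ hp =>
    obtain ⟨f, hf⟩ := hp
    exact ⟨c • f, fun v => by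
      rw [smul_eq_C_mul, map_mul, eval_C, hf, LinearMap.smul_apply, smul_eq_mul]⟩

lemma exists_eval_eq_of_isHomogeneous_two {F : MvPolynomial (Fin 2) R} (hF : F.IsHomogeneous 2) :
    ∃ a b c : R, ∀ x : Fin 2 → R, eval x F = a * x 0 ^ 2 + b * x 0 * x 1 + c * x 1 ^ 2 := by
  rw [← Polynomial.homogenize_eq_of_isHomogeneous hF rfl]
  set p : Polynomial R := aeval ![Polynomial.X, 1] F
  refine ⟨p.coeff 2, p.coeff 1, p.coeff 0, fun x => ?_⟩
  simp only [Polynomial.homogenize, Finset.Nat.sum_antidiagonal_eq_sum_range_succ_mk,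
    Finset.sum_range_succ, Finset.sum_range_zero, map_add, map_zero, eval_monomial,
    Finsupp.prod_fintype _ _ (fun _ => pow_zero _), Fin.prod_univ_two, Finsupp.update_apply,
    Finsupp.single_apply]
  norm_num
  ring

lemma IsHomogeneous.exists_eval_smul_add_smul {q : MvPolynomial σ R} (hq : q.IsHomogeneous 2)
    (u w : σ → R) : ∃ b : R, ∀ x y : R,
      eval (x • u + y • w) q = x ^ 2 * eval u q + b * x * y + y ^ 2 * eval w q := by
  let F : MvPolynomial (Fin 2) R := bind₁ (fun i => C (u i) * X 0 + C (w i) * X 1) q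
  have hF : F.IsHomogeneous 2 := by
    simpa only [one_mul, aeval_eq_bind₁] using hq.aeval _ fun i =>
      (isHomogeneous_C_mul_X (u i) 0).add (isHomogeneous_C_mul_X (w i) 1)
  have hFq : ∀ x y : R, eval ![x, y] F = eval (x • u + y • w) q := by
    intro x y
    rw [eval_bind₁]
    congr 2
    funext i
    simp [mul_comm]
  obtain ⟨a, b, c, habc⟩ := exists_eval_eq_of_isHomogeneous_two hF
  have hu : eval u q = a := by simpa [habc] using (hFq 1 0).symm
  have hw : eval w q = c := by simpa [habc] using (hFq 0 1).symm
  refine ⟨b, fun x y => ?_⟩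
  rw [← hFq, habc, hu, hw]
  simp only [Matrix.cons_val_zero, Matrix.cons_val_one]
  ring

lemma IsHomogeneous.eval_smul_add_smul_eq_zero [NoZeroDivisors R] {q : MvPolynomial σ R}
    (hq : q.IsHomogeneous 2) {u w : σ → R} {s t : R} (hu : eval u q = 0) (hw : eval w q = 0)
    (hs : s ≠ 0) (ht : t ≠ 0) (hst : eval (s • u + t • w) q = 0) (x y : R) :
    eval (x • u + y • w) q = 0 := by
  obtain ⟨b, hb⟩ := hq.exists_eval_smul_add_smul u w
  have hb0 : b = 0 := by
    rw [hb, hu, hw] at hst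
    simpa [hs, ht] using hst
  rw [hb, hu, hw, hb0]
  ring

end CommSemiring

section Field

variable [Field K]

lemma IsHomogeneous.linearIndependent_of_isRelPrime {q₀ q₁ : MvPolynomial σ K} {m n : ℕ}
    (h₀ : q₀.IsHomogeneous m) (h₁ : q₁.IsHomogeneous n) (hm : m ≠ 0) (hn : n ≠ 0)
    (h : IsRelPrime q₀ q₁) : LinearIndependent K ![q₀, q₁] := by
  have dvd_of_smul_add_smul_eq_zero : ∀ {a b : MvPolynomial σ K} {s t : K},
      s • a + t • b = 0 → s ≠ 0 → b ∣ a := fun {a b s t} hab hs =>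
    ⟨C (-(s⁻¹ * t)), by
      rw [mul_comm, ← smul_eq_C_mul, neg_smul, mul_smul, ← smul_neg,
        ← eq_neg_of_add_eq_zero_left hab, inv_smul_smul₀ hs]⟩
  refine LinearIndependent.pair_iff.mpr fun s t hst => ⟨?_, ?_⟩
  · by_contra hs
    exact h₁.not_isUnit hn (h (dvd_of_smul_add_smul_eq_zero hst hs) dvd_rfl)
  · by_contra ht
    exact h₀.not_isUnit hm (h dvd_rfl (dvd_of_smul_add_smul_eq_zero ((add_comm _ _).trans hst) ht))

variable [Infinite K]

lemma IsHomogeneous.eq_zero_of_eval_eq_zero_of_span_eq_top {m : MvPolynomial σ K}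
    (hm : m.IsHomogeneous 1) {ι : Type*} {b : ι → σ → K}
    (hb : Submodule.span K (Set.range b) = ⊤) (h : ∀ i, eval (b i) m = 0) : m = 0 := by
  obtain ⟨f, hf⟩ := hm.exists_linearMap_eval
  have hf0 : f = 0 := LinearMap.ext_on_range hb fun i => by rw [← hf, h, LinearMap.zero_apply]
  exact MvPolynomial.funext fun v => by rw [hf, hf0, LinearMap.zero_apply, map_zero]

lemma IsHomogeneous.dvd_of_forall_eval_eq_zero {ℓ p : MvPolynomial σ K} (hℓ : ℓ.IsHomogeneous 1)
    (hℓ0 : ℓ ≠ 0) (h : ∀ v, eval v ℓ = 0 → eval v p = 0) : ℓ ∣ p := by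
  obtain ⟨f, hf⟩ := hℓ.exists_linearMap_eval
  obtain ⟨e, he⟩ : ∃ e, f e = 1 := by
    obtain ⟨v, hv⟩ : ∃ v, f v ≠ 0 := by
      by_contra! hf0
      exact hℓ0 (MvPolynomial.funext fun v => by rw [hf, hf0, map_zero])
    exact ⟨(f v)⁻¹ • v, by rw [map_smul, smul_eq_mul, inv_mul_cancel₀ hv]⟩
  -- The substitution `g` is the identity modulo `ℓ` and moves every point along `e`
  -- onto the hyperplane `ℓ = 0`.
  let g : σ → MvPolynomial σ K := fun j => X j - C (e j) * ℓ
  have hmod : (Ideal.Quotient.mkₐ K (Ideal.span {ℓ})).comp (bind₁ g) =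
      Ideal.Quotient.mkₐ K (Ideal.span {ℓ}) := by
    refine algHom_ext fun j => ?_
    simp only [AlgHom.comp_apply, bind₁_X_right, g, map_sub, Ideal.Quotient.mkₐ_eq_mk,
      sub_eq_self]
    exact Ideal.Quotient.eq_zero_iff_mem.mpr
      (Ideal.mul_mem_left _ _ (Ideal.mem_span_singleton_self ℓ))
  have hg : bind₁ g p = 0 := by
    refine MvPolynomial.funext fun v => ?_
    have hpt : (fun j => eval v (g j)) = v - f v • e := by
      funext j
      simp [g, hf, mul_comm]
    rw [eval_bind₁, map_zero, hpt]
    apply h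
    rw [hf, map_sub, map_smul, he, smul_eq_mul, mul_one, sub_self]
  rw [← Ideal.mem_span_singleton, ← Ideal.Quotient.eq_zero_iff_mem,
    ← Ideal.Quotient.mkₐ_eq_mk K, ← hmod, AlgHom.comp_apply, hg, map_zero]

end Field

end MvPolynomial

lemma exists_eq_smul_add_smul_of_not_linearIndependent {K V : Type*} [DivisionRing K]
    [AddCommGroup V] [Module K V] {z u w : V} (huw : LinearIndependent K ![u, w])
    (hzu : LinearIndependent K ![z, u]) (hzw : LinearIndependent K ![z, w])
    (h : ¬LinearIndependent K ![z, u, w]) : ∃ s t : K, s ≠ 0 ∧ t ≠ 0 ∧ z = s • u + t • w := by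
  have hz : z ∈ Submodule.span K {u, w} := by
    by_contra hz
    rw [← Matrix.range_cons_cons_empty u w ![]] at hz
    exact h (linearIndependent_finCons.mpr ⟨huw, hz⟩)
  obtain ⟨s, t, rfl⟩ := Submodule.mem_span_pair.mp hz
  refine ⟨s, t, fun hs => ?_, fun ht => ?_, rfl⟩
  · simpa using LinearIndependent.pair_iff.mp hzw 1 (-t) (by simp [hs])
  · simpa using LinearIndependent.pair_iff.mp hzu 1 (-s) (by simp [ht])

lemma Projectivization.linearIndependent_rep_pair {K V : Type*} [DivisionRing K]
    [AddCommGroup V] [Module K V] {u v : Projectivization K V} (h : u ≠ v) :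
    LinearIndependent K ![u.rep, v.rep] := by
  have := independent_iff.mp ((independent_pair_iff_ne u v).mpr h)
  rwa [← FinVec.map_eq] at this

lemma Set.finite_and_ncard_le_of_forall_injective {α : Type*} {S : Set α} {n : ℕ}
    (h : ∀ f : Fin (n + 1) → α, Function.Injective f → ∃ i, f i ∉ S) :
    S.Finite ∧ S.ncard ≤ n := by
  rw [← encard_le_coe_iff_finite_ncard_le]
  by_contra hS
  obtain ⟨t, htS, ht⟩ := exists_subset_encard_eq (Order.add_one_le_of_lt (not_le.mp hS))
  have hcard : Nat.card t = n + 1 := by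
    rw [Nat.card_coe_set_eq, ncard_def, ht]
    rfl
  have := (finite_of_encard_eq_coe ht).to_subtype
  let e := (Finite.equivFinOfCardEq hcard).symm
  obtain ⟨i, hi⟩ := h (fun i => e i) (Subtype.val_injective.comp e.injective)
  exact hi (htS (e i).2)

section PlaneConics

section CommRing

variable {R : Type*} [CommRing R]

/-- The linear form `v ↦ det (v, u, w)`, which cuts out the line through `u` and `w`. -/
noncomputable def lineForm (u w : Fin 3 → R) : MvPolynomial (Fin 3) R :=
  (Matrix.of ![crossProduct u w]).toMvPolynomial 0

lemma isHomogeneous_lineForm (u w : Fin 3 → R) : (lineForm u w).IsHomogeneous 1 :=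
  Matrix.toMvPolynomial_isHomogeneous _ _

lemma eval_lineForm (u w v : Fin 3 → R) : eval v (lineForm u w) = (Matrix.of ![v, u, w]).det := by
  rw [lineForm, Matrix.toMvPolynomial_eval_eq_apply]
  exact (dotProduct_comm _ _).trans (triple_product_eq_det v u w)

end CommRing

variable {K : Type*} [Field K]

lemma eval_lineForm_eq_zero_iff {u w v : Fin 3 → K} :
    eval v (lineForm u w) = 0 ↔ ¬LinearIndependent K ![v, u, w] := by
  rw [eval_lineForm, iff_not_comm, ← ne_eq, ← isUnit_iff_ne_zero, ← Matrix.isUnit_iff_isUnit_det,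
    ← Matrix.linearIndependent_rows_iff_isUnit]
  rfl

lemma lineForm_ne_zero {u w : Fin 3 → K} (huw : LinearIndependent K ![u, w]) :
    lineForm u w ≠ 0 := by
  obtain ⟨c, hc⟩ := exists_linearIndependent_cons_of_lt_finrank huw
    (by rw [Module.finrank_fin_fun]; norm_num)
  intro h
  exact eval_lineForm_eq_zero_iff.mp (by rw [h, map_zero]) hc

variable [Infinite K] {q q₀ q₁ r : MvPolynomial (Fin 3) K} {u w : Fin 3 → K}

lemma lineForm_dvd (huw : LinearIndependent K ![u, w])
    (hq : ∀ x y : K, eval (x • u + y • w) q = 0) : lineForm u w ∣ q := by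
  refine (isHomogeneous_lineForm u w).dvd_of_forall_eval_eq_zero (lineForm_ne_zero huw)
    fun v hv => ?_
  have hmem : v ∈ Submodule.span K {u, w} := by
    by_contra hmem
    rw [← Matrix.range_cons_cons_empty u w ![]] at hmem
    exact eval_lineForm_eq_zero_iff.mp hv (linearIndependent_finCons.mpr ⟨huw, hmem⟩)
  obtain ⟨x, y, rfl⟩ := Submodule.mem_span_pair.mp hmem
  exact hq x y

lemma not_isRelPrime_of_common_line (huw : LinearIndependent K ![u, w])
    (h₀ : ∀ x y : K, eval (x • u + y • w) q₀ = 0) (h₁ : ∀ x y : K, eval (x • u + y • w) q₁ = 0) :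
    ¬IsRelPrime q₀ q₁ := fun h =>
  (isHomogeneous_lineForm u w).not_isUnit one_ne_zero
    (h (lineForm_dvd huw h₀) (lineForm_dvd huw h₁))

lemma MvPolynomial.IsHomogeneous.eq_zero_of_contains_line_and_triangle (hr : r.IsHomogeneous 2)
    (huw : LinearIndependent K ![u, w]) (hline : ∀ x y : K, eval (x • u + y • w) r = 0)
    {p : Fin 3 → Fin 3 → K} (hp : LinearIndependent K p)
    (hoff : ∀ i, LinearIndependent K ![p i, u, w]) (hrp : ∀ i, eval (p i) r = 0) : r = 0 := by
  obtain ⟨m, hm, rfl⟩ := IsHomogeneous.exists_eq_mul_of_dvd (i := 1) (k := 1) hr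
    (isHomogeneous_lineForm u w) (lineForm_dvd huw hline)
  have hmp : ∀ i, eval (p i) m = 0 := fun i =>
    (mul_eq_zero.mp ((map_mul _ _ _).symm.trans (hrp i))).resolve_left
      (mt eval_lineForm_eq_zero_iff.mp (not_not.mpr (hoff i)))
  rw [hm.eq_zero_of_eval_eq_zero_of_span_eq_top
    (hp.span_eq_top_of_card_eq_finrank' (by simp)) hmp, mul_zero]

lemma not_isRelPrime_of_common_zeros_in_general_position (h₀ : q₀.IsHomogeneous 2)
    (h₁ : q₁.IsHomogeneous 2) (huw : LinearIndependent K ![u, w]) {p : Fin 3 → Fin 3 → K}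
    (hp : LinearIndependent K p) (hoff : ∀ i, LinearIndependent K ![p i, u, w])
    (hu₀ : eval u q₀ = 0) (hu₁ : eval u q₁ = 0) (hw₀ : eval w q₀ = 0) (hw₁ : eval w q₁ = 0)
    (hp₀ : ∀ i, eval (p i) q₀ = 0) (hp₁ : ∀ i, eval (p i) q₁ = 0) : ¬IsRelPrime q₀ q₁ := by
  intro hrel
  have hline : ∀ q : MvPolynomial (Fin 3) K, q.IsHomogeneous 2 → eval u q = 0 → eval w q = 0 →
      eval (u + w) q = 0 → ∀ x y : K, eval (x • u + y • w) q = 0 := fun q hq hu hw hs =>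
    hq.eval_smul_add_smul_eq_zero hu hw one_ne_zero one_ne_zero (by rwa [one_smul, one_smul])
  by_cases hz : eval (u + w) q₀ = 0 ∧ eval (u + w) q₁ = 0
  · exact not_isRelPrime_of_common_line huw (hline q₀ h₀ hu₀ hw₀ hz.1)
      (hline q₁ h₁ hu₁ hw₁ hz.2) hrel
  obtain ⟨a, ha⟩ : ∃ a, eval (u + w) q₁ = a := ⟨_, rfl⟩
  obtain ⟨b, hb⟩ : ∃ b, eval (u + w) q₀ = b := ⟨_, rfl⟩
  have hr : C a * q₀ - C b * q₁ = 0 := by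
    have hhom : (C a * q₀ - C b * q₁).IsHomogeneous 2 := (h₀.C_mul a).sub (h₁.C_mul b)
    refine hhom.eq_zero_of_contains_line_and_triangle huw (hline _ hhom ?_ ?_ ?_) hp hoff
      fun i => ?_ <;> simp [*, mul_comm]
  have hab := LinearIndependent.pair_iff.mp
    (h₀.linearIndependent_of_isRelPrime h₁ two_ne_zero two_ne_zero hrel) a (-b)
    (by rw [← hr, smul_eq_C_mul, smul_eq_C_mul, map_neg, neg_mul, sub_eq_add_neg])
  rw [ha, hb] at hz
  exact hz ⟨neg_eq_zero.mp hab.2, hab.1⟩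

lemma not_isRelPrime_of_five_common_zeros (h₀ : q₀.IsHomogeneous 2) (h₁ : q₁.IsHomogeneous 2)
    {v : Fin 5 → Fin 3 → K} (hv : Pairwise fun i j => LinearIndependent K ![v i, v j])
    (hv₀ : ∀ i, eval (v i) q₀ = 0) (hv₁ : ∀ i, eval (v i) q₁ = 0) : ¬IsRelPrime q₀ q₁ := by
  by_cases hcol : ∃ i j k, i ≠ j ∧ i ≠ k ∧ j ≠ k ∧ ¬LinearIndependent K ![v i, v j, v k]
  · obtain ⟨i, j, k, hij, hik, hjk, hdep⟩ := hcol
    obtain ⟨s, t, hs, ht, hst⟩ :=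
      exists_eq_smul_add_smul_of_not_linearIndependent (hv hjk) (hv hij) (hv hik) hdep
    exact not_isRelPrime_of_common_line (hv hjk)
      (h₀.eval_smul_add_smul_eq_zero (hv₀ j) (hv₀ k) hs ht (hst ▸ hv₀ i))
      (h₁.eval_smul_add_smul_eq_zero (hv₁ j) (hv₁ k) hs ht (hst ▸ hv₁ i))
  push Not at hcol
  exact not_isRelPrime_of_common_zeros_in_general_position (p := ![v 2, v 3, v 4]) h₀ h₁
    (hv (by decide : (0 : Fin 5) ≠ 1)) (hcol 2 3 4 (by decide) (by decide) (by decide))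
    (fun i => by fin_cases i <;> exact hcol _ 0 1 (by decide) (by decide) (by decide))
    (hv₀ 0) (hv₁ 0) (hv₀ 1) (hv₁ 1)
    (fun i => by fin_cases i <;> exact hv₀ _) (fun i => by fin_cases i <;> exact hv₁ _)

end PlaneConics

theorem conics_common_zeros_le_four_general
    (q₀ q₁ : MvPolynomial (Fin 3) ℂ)
    (h₀ : q₀.IsHomogeneous 2) (h₁ : q₁.IsHomogeneous 2)
    (hcop : ∀ d : MvPolynomial (Fin 3) ℂ, d ∣ q₀ → d ∣ q₁ → IsUnit d) :
    Set.Finite {x : Projectivization ℂ (Fin 3 → ℂ) |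
        eval x.rep q₀ = 0 ∧ eval x.rep q₁ = 0} ∧
    Set.ncard {x : Projectivization ℂ (Fin 3 → ℂ) |
        eval x.rep q₀ = 0 ∧ eval x.rep q₁ = 0} ≤ 4 := by
  refine Set.finite_and_ncard_le_of_forall_injective fun x hx => ?_
  by_contra! hxS
  exact not_isRelPrime_of_five_common_zeros h₀ h₁
    (fun i j hij => Projectivization.linearIndependent_rep_pair (hx.ne hij))
    (fun i => (hxS i).1) (fun i => (hxS i).2) fun d => hcop d

/-- Two nonzero homogeneous quadratic polynomials in three variables over ℂ with no
common non-constant factor have at most 4 common zeros in ℙ². -/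
theorem conics_common_zeros_le_four
    (q₀ q₁ : MvPolynomial (Fin 3) ℂ)
    (h₀ : q₀.IsHomogeneous 2) (h₁ : q₁.IsHomogeneous 2)
    (hq₀ : q₀ ≠ 0) (hq₁ : q₁ ≠ 0)
    (hcop : ∀ d : MvPolynomial (Fin 3) ℂ, d ∣ q₀ → d ∣ q₁ → IsUnit d) :
    Set.Finite {x : Projectivization ℂ (Fin 3 → ℂ) |
        eval x.rep q₀ = 0 ∧ eval x.rep q₁ = 0} ∧
    Set.ncard {x : Projectivization ℂ (Fin 3 → ℂ) |
        eval x.rep q₀ = 0 ∧ eval x.rep q₁ = 0} ≤ 4 :=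
  conics_common_zeros_le_four_general q₀ q₁ h₀ h₁ hcop
end

section
/- Let q₀, q₁, q₂ be homogeneous quadratic polynomials in four variables over ℂ whose common zero locus in ℙ³ consists of exactly 8 distinct points. Then these 8 points do not all lie on a hyperplane of ℙ³. -/
/-! A finite common zero locus of quadrics meets every plane in at most four points. Among five
coplanar zeros, three collinear ones would put their whole line into the locus, since a quadric
vanishing at three points of a line contains it. Otherwise, in coordinates in which three of the
points are the coordinate points, every quadric restricts to `c ⬝ᵥ (xy, xz, yz)`; the other two
points make `c` orthogonal to two fixed vectors, hence parallel to their cross product, so all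
the quadrics contain one common conic. -/

open MvPolynomial

namespace MvPolynomial

variable {σ R : Type*} [CommSemiring R]

theorem IsHomogeneous.exists_linearMap_eval_eq {p : MvPolynomial σ R} (hp : p.IsHomogeneous 1) :
    ∃ f : (σ → R) →ₗ[R] R, ∀ x, eval x p = f x := by
  rw [← mem_homogeneousSubmodule, homogeneousSubmodule_one_eq_span_X] at hp
  induction hp using Submodule.span_induction with
  | mem _ h =>
    obtain ⟨i, rfl⟩ := h
    exact ⟨LinearMap.proj i, fun x => eval_X i⟩
  | zero => exact ⟨0, fun x => by simp⟩
  | add _ _ _ _ hp hq =>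
    obtain ⟨f, hf⟩ := hp
    obtain ⟨g, hg⟩ := hq
    exact ⟨f + g, fun x => by simp [hf, hg]⟩
  | smul a _ _ hp =>
    obtain ⟨f, hf⟩ := hp
    exact ⟨a • f, fun x => by simp [hf]⟩

theorem IsHomogeneous.exists_quadraticMap_eval_eq {p : MvPolynomial σ R}
    (hp : p.IsHomogeneous 2) :
    ∃ Q : QuadraticMap R (σ → R) R, ∀ x, eval x p = Q x := by
  have hp' : p ∈ homogeneousSubmodule σ R 1 * homogeneousSubmodule σ R 1 := by
    rwa [← pow_two, homogeneousSubmodule_one_pow, mem_homogeneousSubmodule]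
  refine Submodule.mul_induction_on hp' (fun f hf g hg => ?_) fun f g hf hg => ?_
  · obtain ⟨f, hf⟩ := ((mem_homogeneousSubmodule 1 f).mp hf).exists_linearMap_eval_eq
    obtain ⟨g, hg⟩ := ((mem_homogeneousSubmodule 1 g).mp hg).exists_linearMap_eval_eq
    exact ⟨QuadraticMap.linMulLin f g, fun x => by simp [hf, hg]⟩
  · obtain ⟨P, hP⟩ := hf
    obtain ⟨Q, hQ⟩ := hg
    exact ⟨P + Q, fun x => by simp [hP, hQ]⟩

end MvPolynomial

namespace QuadraticMap

variable {R M : Type*} [CommRing R] [AddCommGroup M] [Module R M] (Q : QuadraticMap R M R)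

theorem map_add_eq_add_polar (x y : M) : Q (x + y) = Q x + Q y + polar Q x y := by
  rw [polar]; ring

theorem map_smul_add_smul_of_map_eq_zero {u v : M} (hu : Q u = 0) (hv : Q v = 0) (a b : R) :
    Q (a • u + b • v) = a * b * polar Q u v := by
  simp only [map_add_eq_add_polar, QuadraticMap.map_smul, polar_smul_left, polar_smul_right, hu,
    hv, smul_eq_mul, mul_zero, add_zero, zero_add]
  ring

theorem map_smul_add_smul_add_smul_of_map_eq_zero {u v w : M} (hu : Q u = 0) (hv : Q v = 0)
    (hw : Q w = 0) (a b c : R) :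
    Q (a • u + b • v + c • w) =
      a * b * polar Q u v + a * c * polar Q u w + b * c * polar Q v w := by
  simp only [map_add_eq_add_polar, QuadraticMap.map_smul, polar_add_left, polar_smul_left,
    polar_smul_right, hu, hv, hw, smul_eq_mul, mul_zero, add_zero, zero_add]
  ring

theorem map_smul_add_smul_eq_zero [NoZeroDivisors R] {u v : M} (hu : Q u = 0) (hv : Q v = 0)
    {a b : R} (ha : a ≠ 0) (hb : b ≠ 0) (huv : Q (a • u + b • v) = 0) (x y : R) :
    Q (x • u + y • v) = 0 := by
  rw [map_smul_add_smul_of_map_eq_zero Q hu hv] at huv ⊢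
  simp_all

end QuadraticMap

open Matrix

section Conic

variable {R : Type*} [CommRing R]

def mixedMonomials (x : Fin 3 → R) : Fin 3 → R := ![x 0 * x 1, x 0 * x 2, x 1 * x 2]

theorem QuadraticMap.exists_eq_dotProduct_mixedMonomials (Q : QuadraticMap R (Fin 3 → R) R)
    (h : ∀ i, Q (Pi.single i 1) = 0) : ∃ c, ∀ x, Q x = c ⬝ᵥ mixedMonomials x := by
  refine ⟨![polar Q (Pi.single 0 1) (Pi.single 1 1), polar Q (Pi.single 0 1) (Pi.single 2 1),
    polar Q (Pi.single 1 1) (Pi.single 2 1)], fun x => ?_⟩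
  have hx : x = x 0 • Pi.single 0 1 + x 1 • Pi.single 1 1 + x 2 • Pi.single 2 1 := by
    ext i; fin_cases i <;> simp
  rw [vec3_dotProduct, mixedMonomials]
  nth_rewrite 1 [hx]
  rw [Q.map_smul_add_smul_add_smul_of_map_eq_zero (h 0) (h 1) (h 2)]
  simp only [cons_val_zero, cons_val_one, cons_val]
  ring

theorem dotProduct_eq_zero_of_dotProduct_cross_eq_zero [NoZeroDivisors R] {a b v w : Fin 3 → R}
    (ha : v ⬝ᵥ a = 0) (hb : v ⬝ᵥ b = 0) (hab : a ⨯₃ b ≠ 0) (hw : a ⨯₃ b ⬝ᵥ w = 0) :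
    v ⬝ᵥ w = 0 := by
  have hperp : a ⨯₃ b ⨯₃ v = 0 := by
    rw [cross_cross_eq_smul_sub_smul, dotProduct_comm a, dotProduct_comm b, ha, hb]; simp
  have h := cross_cross_eq_smul_sub_smul' w (a ⨯₃ b) v
  rw [hperp, map_zero, hw, zero_smul, sub_zero, eq_comm, smul_eq_zero, dotProduct_comm] at h
  exact h.resolve_right hab

theorem cross_mixedMonomials_zero (α β : Fin 3 → R) :
    (mixedMonomials α ⨯₃ mixedMonomials β) 0 = α 2 * β 2 * (α 0 * β 1 - α 1 * β 0) := by
  simp only [mixedMonomials, cross_apply, cons_val_zero, cons_val_one, cons_val]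
  ring

end Conic

section ConicField

variable {K : Type*} [Field K]

theorem QuadraticMap.map_eq_zero_of_mem_conic (Q : QuadraticMap K (Fin 3 → K) K)
    (h : ∀ i, Q (Pi.single i 1) = 0) {α β : Fin 3 → K} (hα : Q α = 0) (hβ : Q β = 0)
    (hαβ : mixedMonomials α ⨯₃ mixedMonomials β ≠ 0) {x : Fin 3 → K}
    (hx : mixedMonomials α ⨯₃ mixedMonomials β ⬝ᵥ mixedMonomials x = 0) : Q x = 0 := by
  obtain ⟨c, hc⟩ := Q.exists_eq_dotProduct_mixedMonomials h
  rw [hc] at hα hβ ⊢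
  exact dotProduct_eq_zero_of_dotProduct_cross_eq_zero hα hβ hαβ hx

theorem dotProduct_mixedMonomials_conicPoint {κ : Fin 3 → K} {t : K} (ht : κ 0 * t + κ 2 ≠ 0) :
    κ ⬝ᵥ mixedMonomials ![t, -(κ 1 * t) / (κ 0 * t + κ 2), 1] = 0 := by
  simp only [mixedMonomials, vec3_dotProduct, cons_val_zero, cons_val_one, cons_val]
  field_simp
  ring

end ConicField

open Module Projectivization
open scoped LinearAlgebra.Projectivization

theorem det_ne_zero_of_linearIndependent_comp {K V n : Type*} [Field K] [AddCommGroup V]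
    [Module K V] [Fintype n] [DecidableEq n] (L : (n → K) →ₗ[K] V)
    {v : n → n → K} (h : LinearIndependent K (L ∘ v)) :
    (Matrix.of v).det ≠ 0 :=
  (isUnit_iff_isUnit_det _).mp (linearIndependent_rows_iff_isUnit.mp h.of_comp) |>.ne_zero

section ZeroLocus

variable {ι K V : Type*} [Field K] [AddCommGroup V] [Module K V]

def commonZeroLocus (Q : ι → QuadraticMap K V K) : Set (ℙ K V) := {p | ∀ i, Q i p.rep = 0}

variable {Q : ι → QuadraticMap K V K}

theorem mk_mem_commonZeroLocus_iff {v : V} (hv : v ≠ 0) :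
    mk K v hv ∈ commonZeroLocus Q ↔ ∀ i, Q i v = 0 := by
  obtain ⟨a, ha⟩ := exists_smul_eq_mk_rep K v hv
  simp [commonZeroLocus, ← ha, Units.smul_def, QuadraticMap.map_smul]

theorem commonZeroLocus_infinite_of_injective {n : Type*} {L : (n → K) →ₗ[K] V}
    (hL : Function.Injective L) {f : K → n → K} {i j : n} (hfi : ∀ t, f t i = 1)
    (hfj : ∀ t, f t j = t) {T : Set K} (hT : T.Infinite) (hQ : ∀ t ∈ T, ∀ k, Q k (L (f t)) = 0) :
    (commonZeroLocus Q).Infinite := by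
  have hf : ∀ t, L (f t) ≠ 0 := fun t h => by
    simpa [hfi] using congr_fun (hL (h.trans L.map_zero.symm)) i
  refine Set.infinite_of_injOn_mapsTo (f := fun t => mk K (L (f t)) (hf t)) ?_
    (fun t ht => (mk_mem_commonZeroLocus_iff _).mpr (hQ t ht)) hT
  intro s _ t _ hst
  obtain ⟨a, ha⟩ := (mk_eq_mk_iff' K _ _ _ _).mp hst
  have ha' : a • f t = f s := hL (by rw [map_smul, ha])
  have ha1 : a = 1 := by simpa [hfi] using congr_fun ha' i
  simpa [ha1, hfj] using (congr_fun ha' j).symm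

variable [Infinite K]

theorem linearIndependent_rep_of_commonZeroLocus_finite
    (hZ : (commonZeroLocus Q).Finite) {p q r : ℙ K V} (hp : p ∈ commonZeroLocus Q)
    (hq : q ∈ commonZeroLocus Q) (hr : r ∈ commonZeroLocus Q) (hpq : p ≠ q) (hpr : p ≠ r)
    (hqr : q ≠ r) : LinearIndependent K ![r.rep, p.rep, q.rep] := by
  have hpq' := linearIndependent_pair_iff_ne.mpr hpq
  refine linearIndependent_finCons.mpr ⟨hpq', fun hspan => ?_⟩
  rw [Matrix.range_cons, Matrix.range_cons, Matrix.range_empty, Set.union_empty,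
    Set.singleton_union, Submodule.mem_span_pair] at hspan
  obtain ⟨a, b, hab⟩ := hspan
  have ha : a ≠ 0 := by
    rintro rfl
    refine hqr (Eq.symm ?_)
    rw [← mk_rep q, ← mk_rep r, mk_eq_mk_iff']
    exact ⟨b, by simpa using hab⟩
  have hb : b ≠ 0 := by
    rintro rfl
    refine hpr (Eq.symm ?_)
    rw [← mk_rep p, ← mk_rep r, mk_eq_mk_iff']
    exact ⟨a, by simpa using hab⟩
  refine hZ.not_infinite (commonZeroLocus_infinite_of_injective
    (linearIndependent_iff_injective_fintypeLinearCombination.mp hpq') (f := fun t => ![1, t])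
    (i := 0) (j := 1) (fun _ => rfl) (fun _ => rfl) Set.infinite_univ fun t _ k => ?_)
  simpa [Fintype.linearCombination_apply, Fin.sum_univ_two] using
    (Q k).map_smul_add_smul_eq_zero (hp k) (hq k) ha hb (hab ▸ hr k) 1 t

theorem commonZeroLocus_infinite_of_conic {L : (Fin 3 → K) →ₗ[K] V}
    (hL : Function.Injective L) {α β : Fin 3 → K} (hα : α 2 ≠ 0) (hβ : β 2 ≠ 0)
    (hαβ : α 0 * β 1 - α 1 * β 0 ≠ 0) (hQe : ∀ k i, Q k (L (Pi.single i 1)) = 0)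
    (hQα : ∀ k, Q k (L α) = 0) (hQβ : ∀ k, Q k (L β) = 0) : (commonZeroLocus Q).Infinite := by
  have hκ : (mixedMonomials α ⨯₃ mixedMonomials β) 0 ≠ 0 := by
    rw [cross_mixedMonomials_zero]
    exact mul_ne_zero (mul_ne_zero hα hβ) hαβ
  set κ := mixedMonomials α ⨯₃ mixedMonomials β
  have hT : {t : K | κ 0 * t + κ 2 ≠ 0}.Infinite :=
    (Set.finite_singleton (-κ 2 / κ 0)).infinite_compl.mono fun t ht h =>
      Set.mem_compl_singleton_iff.mp ht (by field_simp; linear_combination h)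
  refine commonZeroLocus_infinite_of_injective hL (i := 2) (j := 0) (fun _ => rfl) (fun _ => rfl)
    hT fun t ht k => ((Q k).comp L).map_eq_zero_of_mem_conic (hQe k) (hQα k) (hQβ k)
      (fun h => hκ (congr_fun h 0)) (dotProduct_mixedMonomials_conicPoint ht)

theorem commonZeroLocus_infinite_of_five_coplanar {W : Submodule K V}
    (hW : finrank K W = 3) {p : Fin 5 → ℙ K V} (hp : Function.Injective p)
    (hpZ : ∀ i, p i ∈ commonZeroLocus Q) (hpW : ∀ i, (p i).rep ∈ W) :
    (commonZeroLocus Q).Infinite := by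
  intro hZ
  have hind {i j k : Fin 5} (hij : i ≠ j := by decide) (hik : i ≠ k := by decide)
      (hjk : j ≠ k := by decide) :
      LinearIndependent K ![(p k).rep, (p i).rep, (p j).rep] :=
    linearIndependent_rep_of_commonZeroLocus_finite hZ (hpZ i) (hpZ j) (hpZ k) (hp.ne hij)
      (hp.ne hik) (hp.ne hjk)
  set L := Fintype.linearCombination K ![(p 0).rep, (p 1).rep, (p 2).rep]
  have hL : Function.Injective L :=
    linearIndependent_iff_injective_fintypeLinearCombination.mp (hind (i := 1) (j := 2) (k := 0))
  have hLe (i : Fin 3) : L (Pi.single i 1) = (p i.castSucc.castSucc).rep := by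
    fin_cases i <;> simp [L, Fintype.linearCombination_apply_single]
  have : FiniteDimensional K W := finite_of_finrank_eq_succ hW
  have hrange : LinearMap.range L = W := by
    refine Submodule.eq_of_le_of_finrank_eq ?_
      (by rw [LinearMap.finrank_range_of_inj hL]; simp [hW])
    rw [Fintype.range_linearCombination, Submodule.span_le, Set.range_subset_iff]
    intro i; fin_cases i <;> exact hpW _
  obtain ⟨α, hα⟩ : (p 3).rep ∈ LinearMap.range L := hrange ▸ hpW 3
  obtain ⟨β, hβ⟩ : (p 4).rep ∈ LinearMap.range L := hrange ▸ hpW 4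
  have hdet {x y z : Fin 3 → K} (h : LinearIndependent K ![L x, L y, L z]) :
      (Matrix.of ![x, y, z]).det ≠ 0 :=
    det_ne_zero_of_linearIndependent_comp L (by convert h using 1; ext i; fin_cases i <;> rfl)
  have hα2 : α 2 ≠ 0 := by
    simpa [det_fin_three] using hdet (x := α) (y := Pi.single 0 1) (z := Pi.single 1 1)
      (by simpa [hα, hLe] using hind (i := 0) (j := 1) (k := 3))
  have hβ2 : β 2 ≠ 0 := by
    simpa [det_fin_three] using hdet (x := β) (y := Pi.single 0 1) (z := Pi.single 1 1)
      (by simpa [hβ, hLe] using hind (i := 0) (j := 1) (k := 4))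
  have hαβ : α 0 * β 1 - α 1 * β 0 ≠ 0 := by
    simpa [det_fin_three] using hdet (x := Pi.single 2 1) (y := α) (z := β)
      (by simpa [hα, hβ, hLe] using hind (i := 3) (j := 4) (k := 2))
  exact commonZeroLocus_infinite_of_conic hL hα2 hβ2 hαβ
    (fun k i => by rw [hLe]; exact hpZ _ k) (fun k => hα ▸ hpZ 3 k) (fun k => hβ ▸ hpZ 4 k) hZ

theorem ncard_le_four_of_subset_commonZeroLocus (hZ : (commonZeroLocus Q).Finite)
    {W : Submodule K V} (hW : finrank K W = 3) {S : Set (ℙ K V)} (hSZ : S ⊆ commonZeroLocus Q)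
    (hSW : ∀ p ∈ S, p.rep ∈ W) : S.ncard ≤ 4 := by
  by_contra! h
  obtain ⟨x, -⟩ := Set.nonempty_of_ncard_ne_zero (s := S) (by omega)
  have : Nonempty (ℙ K V) := ⟨x⟩
  obtain ⟨p, hpS, hp⟩ := (Set.finite_univ (α := Fin 5)).exists_injOn_of_encard_le (t := S)
    (by
      rw [Set.encard_univ, ENat.card_eq_coe_fintype_card, Fintype.card_fin,
        ← (hZ.subset hSZ).cast_ncard_eq]
      exact_mod_cast h)
  exact commonZeroLocus_infinite_of_five_coplanar hW (Set.injOn_univ.mp hp)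
    (fun i => hSZ (hpS (Set.mem_univ i))) (fun i => hSW _ (hpS (Set.mem_univ i))) hZ

end ZeroLocus

/-- If the common zero locus in ℙ³ of three homogeneous quadrics in four variables
consists of exactly 8 distinct points, these 8 points do not all lie on a
hyperplane. -/
theorem eight_points_not_on_hyperplane
    (q₀ q₁ q₂ : MvPolynomial (Fin 4) ℂ)
    (h₀ : q₀.IsHomogeneous 2) (h₁ : q₁.IsHomogeneous 2) (h₂ : q₂.IsHomogeneous 2)
    (S : Set (Projectivization ℂ (Fin 4 → ℂ)))
    (hS : S = {x | eval x.rep q₀ = 0 ∧ eval x.rep q₁ = 0 ∧ eval x.rep q₂ = 0})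
    (hfin : S.Finite) (hcard : S.ncard = 8) :
    ¬ ∃ ℓ : (Fin 4 → ℂ) →ₗ[ℂ] ℂ, ℓ ≠ 0 ∧ ∀ x ∈ S, ℓ x.rep = 0 := by
  rintro ⟨ℓ, hℓ, hℓS⟩
  obtain ⟨Q₀, hQ₀⟩ := h₀.exists_quadraticMap_eval_eq
  obtain ⟨Q₁, hQ₁⟩ := h₁.exists_quadraticMap_eval_eq
  obtain ⟨Q₂, hQ₂⟩ := h₂.exists_quadraticMap_eval_eq
  have hSZ : S = commonZeroLocus ![Q₀, Q₁, Q₂] := by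
    rw [hS]; ext p; simp [commonZeroLocus, Fin.forall_fin_succ, hQ₀, hQ₁, hQ₂]
  have hker : finrank ℂ (LinearMap.ker ℓ) = 3 := by
    have := Module.Dual.finrank_ker_add_one_of_ne_zero hℓ
    simp only [finrank_fin_fun] at this
    omega
  have := ncard_le_four_of_subset_commonZeroLocus (hSZ ▸ hfin) hker hSZ.le hℓS
  omega
end
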